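/- Assume b = s. There exists a constant c₂ > 0 such that for every 0 < β ≤ 1 and every integer n with 0 ≤ n ≤ c₂/β, one has v_n ≤ β. -/
import Mathlib


open MeasureTheory ProbabilityTheory Real Filter Topology

namespace DiamondPolymer

/-- Addresses of the interior vertices of the diamond hierarchical lattices: a vertex of
generation `k` is addressed by a list of `k - 1` (branch, segment) choices together with a final
(branch, junction) choice. -/
abbrev GIdx (b s : ℕ) : Type := List (Fin b × Fin s) × (Fin b × Fin (s - 1))

/-- Directed paths from `A` to `B` in `D n`: a path in `D (n+1)` chooses a branch of the
coarsest diamond and, for each of its `s` segments, a path in the corresponding copy of `D n`. -/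
def PPath (b s : ℕ) : ℕ → Type
  | 0 => PUnit
  | n + 1 => Fin b × (Fin s → PPath b s n)

def PPathFintype (b s : ℕ) : ∀ n, Fintype (PPath b s n)
  | 0 => inferInstanceAs (Fintype PUnit)
  | n + 1 => letI := PPathFintype b s n
      inferInstanceAs (Fintype (Fin b × (Fin s → PPath b s n)))

instance (b s n : ℕ) : Fintype (PPath b s n) := PPathFintype b s n

def PPathDecEq (b s : ℕ) : ∀ n, DecidableEq (PPath b s n)
  | 0 => inferInstanceAs (DecidableEq PUnit)
  | n + 1 => letI := PPathDecEq b s n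
      inferInstanceAs (DecidableEq (Fin b × (Fin s → PPath b s n)))

instance (b s n : ℕ) : DecidableEq (PPath b s n) := PPathDecEq b s n

/-- The sum of the environment over the interior vertices visited by a path, where `pre` is the
address prefix of the copy of `D n` the path lives in. -/
def ham (b s : ℕ) (ω : GIdx b s → ℝ) : ∀ n, PPath b s n → List (Fin b × Fin s) → ℝ
  | 0, _, _ => 0
  | n + 1, g, pre =>
      let g' : Fin b × (Fin s → PPath b s n) := g
      (∑ j : Fin (s - 1), ω (pre, (g'.1, j))) +
        ∑ j : Fin s, ham b s ω n (g'.2 j) (pre ++ [(g'.1, j)])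

/-- The Hamiltonian `H_n(g) = ∑_{t=1}^{s^n - 1} ω(g_t)`. -/
def H (b s : ℕ) (ω : GIdx b s → ℝ) (n : ℕ) (g : PPath b s n) : ℝ := ham b s ω n g List.nil

/-- The partition function `Z_n(β) = ∑_{g ∈ Γ_n} exp (β H_n(g))`. -/
noncomputable def Z (b s : ℕ) (β : ℝ) (n : ℕ) (ω : GIdx b s → ℝ) : ℝ :=
  ∑ g : PPath b s n, Real.exp (β * H b s ω n g)

/-- The partition function as a random variable on the environment space. -/
noncomputable def Zrv {b s : ℕ} {Ω : Type*} (ω : GIdx b s → Ω → ℝ) (β : ℝ) (n : ℕ) (x : Ω) : ℝ :=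
  Z b s β n fun z => ω z x

/-- The normalized partition function `W_n(β) = Z_n(β) / Q[Z_n(β)]`. -/
noncomputable def Wrv {b s : ℕ} {Ω : Type*} [MeasurableSpace Ω] (Q : Measure Ω)
    (ω : GIdx b s → Ω → ℝ) (β : ℝ) (n : ℕ) (x : Ω) : ℝ :=
  Zrv ω β n x / ∫ y, Zrv ω β n y ∂Q

/-- The cumulant generating function `λ(β) = log Q[exp (β ω_0)]` of the marginal `μ`. -/
noncomputable def lam (μ : Measure ℝ) (β : ℝ) : ℝ := Real.log (∫ x, Real.exp (β * x) ∂μ)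

/-- The annealed free energy `f(β) = λ(β) + log b / (s - 1)`. -/
noncomputable def fann (b s : ℕ) (μ : Measure ℝ) (β : ℝ) : ℝ :=
  lam μ β + Real.log b / ((s : ℝ) - 1)

/-- The σ-algebra `F_n` generated by the environment of the first `n` generations. -/
def Fσ {b s : ℕ} {Ω : Type*} [MeasurableSpace Ω] (ω : GIdx b s → Ω → ℝ) (n : ℕ) :
    MeasurableSpace Ω :=
  ⨆ z : {z : GIdx b s // z.1.length < n}, MeasurableSpace.comap (ω z.1) inferInstance

/-- Restriction of a path in `D (n+1)` to `D n` (forgetting the finest generation). -/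
def coarsen (b s : ℕ) : ∀ n, PPath b s (n + 1) → PPath b s n
  | 0, _ => PUnit.unit
  | n + 1, g =>
      let g' : Fin b × (Fin s → PPath b s (n + 1)) := g
      (g'.1, fun j => coarsen b s n (g'.2 j))

/-- Restriction `g ↦ g|_m` of a path in `D (m + k)` to `D m`. -/
def down (b s m : ℕ) : ∀ k, PPath b s (m + k) → PPath b s m
  | 0, g => g
  | k + 1, g => down b s m k (coarsen b s (m + k) g)

/-- `μ_{m+k} (γ|_m = g)`, the polymer measure of the set of paths restricting to `g`. -/
noncomputable def muRestr (b s : ℕ) (β : ℝ) (m k : ℕ) (g : PPath b s m)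
    (ω : GIdx b s → ℝ) : ℝ :=
  (∑ g' : PPath b s (m + k),
      if down b s m k g' = g then Real.exp (β * H b s ω (m + k) g') else 0) /
    Z b s β (m + k) ω

/-- The sequence `(v_n)` of variances of `W_n`, as a dynamical system: `v_0 = 0`,
`v_{n+1} = (1/b) (e^{(s-1)γ} (v_n + 1)^s - 1)` where `γ = γ(β) = λ(2β) - 2λ(β)`. -/
noncomputable def vseq (b s : ℕ) (γ : ℝ) : ℕ → ℝ
  | 0 => 0
  | n + 1 => (1 / (b : ℝ)) * (Real.exp (((s : ℝ) - 1) * γ) * (vseq b s γ n + 1) ^ s - 1)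


/-- Helper: key exponential inequality `(1-x) e^x ≤ 1`. -/
lemma one_sub_mul_exp_le (x : ℝ) : (1 - x) * Real.exp x ≤ 1 := by
  have h1 := Real.add_one_le_exp (-x)
  have h2 : Real.exp (-x) * Real.exp x = 1 := by rw [← Real.exp_add]; simp
  nlinarith [Real.exp_pos x]

/-- Pointwise quadratic bound on `e^{2βx} - 1 - 2βx` for `0 < β ≤ 1`. -/
lemma exp_quad_bound {β : ℝ} (hβ : 0 < β) (hβ1 : β ≤ 1) (x : ℝ) :
    Real.exp (2*β*x) - 1 - 2*β*x ≤ β^2 * (4*x^2 + 16*Real.exp (3*x)) := by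
  rcases le_or_gt x 0 with hx | hx
  · have ht0 : 2*β*x ≤ 0 := by nlinarith
    have h3 : Real.exp (2*β*x) - 1 - 2*β*x ≤ (2*β*x)^2 := by
      nlinarith [one_sub_mul_exp_le (2*β*x), Real.exp_pos (2*β*x)]
    nlinarith [Real.exp_pos (3*x), sq_nonneg x]
  · have ht0 : 0 ≤ 2*β*x := by positivity
    have hkey := one_sub_mul_exp_le (2*β*x)
    have h1 : Real.exp (2*β*x) - 1 - 2*β*x ≤ (2*β*x)^2 * Real.exp (2*β*x) := by
      nlinarith [hkey, mul_le_mul_of_nonneg_left hkey ht0]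
    have hee : Real.exp (2*β*x) ≤ Real.exp (2*x) := Real.exp_le_exp.mpr (by nlinarith)
    have h2 : (2*β*x)^2 * Real.exp (2*β*x) ≤ 4*β^2*x^2 * Real.exp (2*x) := by
      nlinarith [Real.exp_pos (2*β*x), sq_nonneg (β*x)]
    have h3 : x^2 ≤ 4 * Real.exp x := by
      have ha := Real.add_one_le_exp (x/2)
      have hb : Real.exp (x/2) * Real.exp (x/2) = Real.exp x := by
        rw [← Real.exp_add]; ring_nf
      nlinarith [Real.exp_pos (x/2)]
    have h4 : Real.exp x * Real.exp (2*x) = Real.exp (3*x) := by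
      rw [← Real.exp_add]; ring_nf
    have h5 : 4*β^2*x^2 * Real.exp (2*x) ≤ 16*β^2 * Real.exp (3*x) := by
      have := mul_le_mul_of_nonneg_right h3 (Real.exp_pos (2*x)).le
      nlinarith [sq_nonneg β]
    nlinarith [sq_nonneg (β*x), sq_nonneg β, Real.exp_pos (3*x)]

/-- The cumulant bound: `γ(β) = λ(2β) - 2λ(β) ≤ K β²` for `0 < β ≤ 1`. -/
lemma gamma_bound (μ : Measure ℝ) [IsProbabilityMeasure μ]
    (hmean : (∫ x, x ∂μ) = 0)
    (hvar : (∫ x, x ^ 2 ∂μ) = 1)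
    (hmgf : ∀ β : ℝ, 0 < β → Integrable (fun x => Real.exp (β * x)) μ) :
    ∃ K : ℝ, 1 ≤ K ∧ ∀ β : ℝ, 0 < β → β ≤ 1 →
      lam μ (2 * β) - 2 * lam μ β ≤ K * β^2 := by
  have hx2 : Integrable (fun x : ℝ => x ^ 2) μ := by
    by_contra h
    rw [MeasureTheory.integral_undef h] at hvar
    norm_num at hvar
  have hg1 : Integrable (fun x : ℝ => x ^ 2 + 1) μ := hx2.add (integrable_const 1)
  have hx : Integrable (fun x : ℝ => x) μ := by
    refine hg1.mono' measurable_id.aestronglyMeasurable ?_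
    filter_upwards with x
    show ‖x‖ ≤ x ^ 2 + 1
    simp only [Real.norm_eq_abs]
    nlinarith [sq_abs x, abs_nonneg x, sq_nonneg (|x| - 1)]
  have hE : Integrable (fun x : ℝ => Real.exp (3*x)) μ := hmgf 3 (by norm_num)
  have hone : ∀ a : ℝ, 0 < a → (1:ℝ) ≤ ∫ x, Real.exp (a * x) ∂μ := by
    intro a ha
    have hxa : Integrable (fun x : ℝ => a * x) μ := hx.const_mul a
    have hia : Integrable (fun x : ℝ => a * x + 1) μ := hxa.add (integrable_const 1)
    have hmono := MeasureTheory.integral_mono hia (hmgf a ha)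
      (fun x => Real.add_one_le_exp (a * x))
    have e1 : ∫ x, (a * x + 1) ∂μ = (∫ x, a * x ∂μ) + ∫ x, (1:ℝ) ∂μ :=
      MeasureTheory.integral_add hxa (integrable_const 1)
    have e2 : ∫ x, a * x ∂μ = a * ∫ x, x ∂μ :=
      MeasureTheory.integral_const_mul a (fun x => x)
    have e3 : ∫ x, (1:ℝ) ∂μ = 1 := by simp
    rw [e1, e2, hmean, e3] at hmono
    linarith
  refine ⟨4 + 16 * ∫ x, Real.exp (3*x) ∂μ, ?_, ?_⟩
  · have h0 : (0:ℝ) ≤ ∫ x, Real.exp (3*x) ∂μ :=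
      MeasureTheory.integral_nonneg fun x => (Real.exp_pos _).le
    linarith
  intro β hβ hβ1
  have h2β : Integrable (fun x : ℝ => Real.exp (2*β*x)) μ := hmgf (2*β) (by linarith)
  have hIone : (1:ℝ) ≤ ∫ x, Real.exp (2*β*x) ∂μ := hone (2*β) (by linarith)
  have hlamβ : 0 ≤ lam μ β := Real.log_nonneg (hone β hβ)
  have hlam2β : lam μ (2*β) ≤ (∫ x, Real.exp (2*β*x) ∂μ) - 1 := by
    have hpos : (0:ℝ) < ∫ x, Real.exp (2*β*x) ∂μ := lt_of_lt_of_le one_pos hIone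
    exact Real.log_le_sub_one_of_pos hpos
  have hexp1 : Integrable (fun x : ℝ => Real.exp (2*β*x) - 1) μ :=
    h2β.sub (integrable_const 1)
  have hlin : Integrable (fun x : ℝ => 2*β*x) μ := hx.const_mul (2*β)
  have hsub : Integrable (fun x : ℝ => Real.exp (2*β*x) - 1 - 2*β*x) μ := hexp1.sub hlin
  have h4x2 : Integrable (fun x : ℝ => 4*x^2) μ := hx2.const_mul 4
  have h16E : Integrable (fun x : ℝ => 16*Real.exp (3*x)) μ := hE.const_mul 16
  have hrhs0 : Integrable (fun x : ℝ => 4*x^2 + 16*Real.exp (3*x)) μ := h4x2.add h16E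
  have hrhs : Integrable (fun x : ℝ => β^2 * (4*x^2 + 16*Real.exp (3*x))) μ :=
    hrhs0.const_mul (β^2)
  have hmono2 := MeasureTheory.integral_mono hsub hrhs (fun x => exp_quad_bound hβ hβ1 x)
  have hL1 : ∫ x, (Real.exp (2*β*x) - 1 - 2*β*x) ∂μ
      = (∫ x, (Real.exp (2*β*x) - 1) ∂μ) - ∫ x, 2*β*x ∂μ :=
    MeasureTheory.integral_sub hexp1 hlin
  have hL2 : ∫ x, (Real.exp (2*β*x) - 1) ∂μ
      = (∫ x, Real.exp (2*β*x) ∂μ) - ∫ x, (1:ℝ) ∂μ :=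
    MeasureTheory.integral_sub h2β (integrable_const 1)
  have hL3 : ∫ x, 2*β*x ∂μ = (2*β) * ∫ x, x ∂μ :=
    MeasureTheory.integral_const_mul (2*β) (fun x => x)
  have hR1 : ∫ x, (β^2 * (4*x^2 + 16*Real.exp (3*x))) ∂μ
      = β^2 * ∫ x, (4*x^2 + 16*Real.exp (3*x)) ∂μ :=
    MeasureTheory.integral_const_mul (β^2) _
  have hR2 : ∫ x, (4*x^2 + 16*Real.exp (3*x)) ∂μ
      = (∫ x, 4*x^2 ∂μ) + ∫ x, 16*Real.exp (3*x) ∂μ :=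
    MeasureTheory.integral_add h4x2 h16E
  have hR3 : ∫ x, 4*x^2 ∂μ = 4* ∫ x, x^2 ∂μ :=
    MeasureTheory.integral_const_mul 4 (fun x => x^2)
  have hR4 : ∫ x, 16*Real.exp (3*x) ∂μ = 16* ∫ x, Real.exp (3*x) ∂μ :=
    MeasureTheory.integral_const_mul 16 _
  have e3 : ∫ x, (1:ℝ) ∂μ = 1 := by simp
  rw [hL1, hL2, hL3, hmean, e3] at hmono2
  rw [hR1, hR2, hR3, hR4, hvar] at hmono2
  nlinarith [hlamβ, hlam2β, sq_nonneg β]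

/-- `vseq` is nonnegative when `γ ≥ 0`. -/
lemma vseq_nonneg (b s : ℕ) (hb : 1 ≤ b) (hs : 1 ≤ s) {γ : ℝ} (hγ : 0 ≤ γ) :
    ∀ n, 0 ≤ vseq b s γ n := by
  intro n
  induction n with
  | zero => simp [vseq]
  | succ n ih =>
    have hbR : (1:ℝ) ≤ b := by exact_mod_cast hb
    have hsR : (1:ℝ) ≤ s := by exact_mod_cast hs
    rw [vseq]
    have h1 : (1:ℝ) ≤ Real.exp (((s:ℝ)-1)*γ) := by
      exact Real.one_le_exp (mul_nonneg (by linarith) hγ)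
    have h2 : (1:ℝ) ≤ (vseq b s γ n + 1)^s := by
      have := pow_le_pow_left₀ zero_le_one (by linarith : (1:ℝ) ≤ vseq b s γ n + 1) s
      simpa using this
    have h3 : (1:ℝ) ≤ Real.exp (((s:ℝ)-1)*γ) * (vseq b s γ n + 1)^s := by
      nlinarith
    have h4 : (0:ℝ) ≤ 1 / (b:ℝ) := by positivity
    nlinarith

/-- `vseq _ _ _ n + 1 ≥ 0` for any `γ` (when `b ≥ 1`). -/
lemma vseq_add_one_nonneg (b s : ℕ) (hb : 1 ≤ b) (γ : ℝ) :
    ∀ n, 0 ≤ vseq b s γ n + 1 := by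
  intro n
  induction n with
  | zero => simp [vseq]
  | succ n ih =>
    have hbR : (1:ℝ) ≤ b := by exact_mod_cast hb
    have hb0 : (0:ℝ) < b := by linarith
    rw [vseq]
    have h1 : (0:ℝ) ≤ Real.exp (((s:ℝ)-1)*γ) * (vseq b s γ n + 1)^s :=
      mul_nonneg (Real.exp_pos _).le (pow_nonneg ih s)
    have h5 : (0:ℝ) < 1/(b:ℝ) := by positivity
    have h6 : (1:ℝ)/(b:ℝ) ≤ 1 := by
      rw [div_le_one hb0]; exact hbR
    nlinarith

/-- `vseq` is monotone in `γ`. -/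
lemma vseq_mono (b s : ℕ) (hb : 1 ≤ b) (hs : 1 ≤ s) {γ γ' : ℝ} (h : γ ≤ γ') :
    ∀ n, vseq b s γ n ≤ vseq b s γ' n := by
  intro n
  induction n with
  | zero => simp [vseq]
  | succ n ih =>
    have hsR : (1:ℝ) ≤ s := by exact_mod_cast hs
    rw [vseq, vseq]
    have h0 : 0 ≤ vseq b s γ n + 1 := vseq_add_one_nonneg b s hb γ n
    have h1 : Real.exp (((s:ℝ)-1)*γ) ≤ Real.exp (((s:ℝ)-1)*γ') :=
      Real.exp_le_exp.mpr (mul_le_mul_of_nonneg_left h (by linarith))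
    have h2 : (vseq b s γ n + 1)^s ≤ (vseq b s γ' n + 1)^s :=
      pow_le_pow_left₀ h0 (by linarith) s
    have h3 : Real.exp (((s:ℝ)-1)*γ) * (vseq b s γ n + 1)^s
        ≤ Real.exp (((s:ℝ)-1)*γ') * (vseq b s γ' n + 1)^s :=
      mul_le_mul h1 h2 (pow_nonneg h0 s) (Real.exp_pos _).le
    have h4 : (0:ℝ) ≤ 1 / (b:ℝ) := by positivity
    nlinarith

set_option maxHeartbeats 1000000 in
/-- Main dynamical bound: if `γ ≥ 0` is small relative to `N`, then
`v_n ≤ 2 s γ n` for `n ≤ N`. -/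
lemma vseq_main (s : ℕ) (hs : 2 ≤ s) {γ : ℝ} (hγ : 0 ≤ γ) (N : ℕ)
    (hC2 : (((s:ℝ)-1) + 2*(s:ℝ)^2*N) * γ ≤ 1/2)
    (hC1 : (((s:ℝ)-1) + 2*(s:ℝ)^2*N)^2 * γ ≤ (s:ℝ)^2/2) :
    ∀ n, n ≤ N → vseq s s γ n ≤ 2*(s:ℝ)*γ*n := by
  have hS : (2:ℝ) ≤ (s:ℝ) := by exact_mod_cast hs
  have hS0 : (0:ℝ) < s := by linarith
  have hSne : (s:ℝ) ≠ 0 := ne_of_gt hS0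
  intro n
  induction n with
  | zero => intro _; simp [vseq]
  | succ n ih =>
    intro hn1
    have hn : n ≤ N := Nat.le_of_succ_le hn1
    have IH := ih hn
    have hv0 : 0 ≤ vseq s s γ n := vseq_nonneg s s (by omega) (by omega) hγ n
    rw [vseq]
    have hnN : (n:ℝ) ≤ N := by exact_mod_cast hn
    have hn0 : (0:ℝ) ≤ n := Nat.cast_nonneg n
    have hx0 : 0 ≤ ((s:ℝ)-1)*γ + 2*(s:ℝ)^2*γ*n := by
      have a1 : (0:ℝ) ≤ ((s:ℝ)-1)*γ := mul_nonneg (by linarith) hγ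
      have a2 : (0:ℝ) ≤ 2*(s:ℝ)^2*γ*n := by positivity
      linarith
    have hxX : ((s:ℝ)-1)*γ + 2*(s:ℝ)^2*γ*n ≤ (((s:ℝ)-1) + 2*(s:ℝ)^2*N)*γ := by
      have a1 : (0:ℝ) ≤ 2*(s:ℝ)^2*γ := by positivity
      nlinarith [mul_le_mul_of_nonneg_left hnN a1]
    have hxh : ((s:ℝ)-1)*γ + 2*(s:ℝ)^2*γ*n ≤ 1/2 := le_trans hxX hC2
    have hb1 : vseq s s γ n + 1 ≤ Real.exp (2*(s:ℝ)*γ*n) := by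
      have h := Real.add_one_le_exp (2*(s:ℝ)*γ*n)
      linarith
    have hb2 : (vseq s s γ n + 1)^s ≤ Real.exp (2*(s:ℝ)*γ*n)^s :=
      pow_le_pow_left₀ (by linarith) hb1 s
    have hb3 : Real.exp (2*(s:ℝ)*γ*n)^s = Real.exp ((s:ℝ)*(2*(s:ℝ)*γ*n)) :=
      (Real.exp_nat_mul _ s).symm
    have hb4 : Real.exp (((s:ℝ)-1)*γ) * (vseq s s γ n + 1)^s
        ≤ Real.exp (((s:ℝ)-1)*γ + 2*(s:ℝ)^2*γ*n) := by
      have step1 : Real.exp (((s:ℝ)-1)*γ) * (vseq s s γ n + 1)^s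
          ≤ Real.exp (((s:ℝ)-1)*γ) * Real.exp ((s:ℝ)*(2*(s:ℝ)*γ*n)) := by
        rw [← hb3]
        exact mul_le_mul_of_nonneg_left hb2 (Real.exp_pos _).le
      have step2 : Real.exp (((s:ℝ)-1)*γ) * Real.exp ((s:ℝ)*(2*(s:ℝ)*γ*n))
          = Real.exp (((s:ℝ)-1)*γ + 2*(s:ℝ)^2*γ*n) := by
        rw [← Real.exp_add]; ring_nf
      rw [step2] at step1
      exact step1
    set x : ℝ := ((s:ℝ)-1)*γ + 2*(s:ℝ)^2*γ*n with hxdef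
    have hexp : Real.exp x ≤ 1 + x + 2*x^2 := by
      nlinarith [one_sub_mul_exp_le x, Real.exp_pos x, sq_nonneg x, hx0, hxh]
    have hfin : (1/(s:ℝ))*(Real.exp (((s:ℝ)-1)*γ)*(vseq s s γ n + 1)^s - 1)
        ≤ (1/(s:ℝ))*(x + 2*x^2) := by
      have h9 : (0:ℝ) ≤ 1/(s:ℝ) := by positivity
      have h10 : Real.exp (((s:ℝ)-1)*γ)*(vseq s s γ n + 1)^s - 1 ≤ x + 2*x^2 := by
        have := hb4.trans hexp
        linarith
      exact mul_le_mul_of_nonneg_left h10 h9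
    refine hfin.trans ?_
    have hX2 : x^2 ≤ ((((s:ℝ)-1) + 2*(s:ℝ)^2*N)*γ)^2 := pow_le_pow_left₀ hx0 hxX 2
    have h5 : ((((s:ℝ)-1) + 2*(s:ℝ)^2*N)*γ)^2 ≤ ((s:ℝ)^2/2)*γ := by
      have h6 := mul_le_mul_of_nonneg_right hC1 hγ
      calc ((((s:ℝ)-1) + 2*(s:ℝ)^2*N)*γ)^2
          = ((((s:ℝ)-1) + 2*(s:ℝ)^2*N)^2*γ)*γ := by ring
        _ ≤ ((s:ℝ)^2/2)*γ := h6
    have hx2b : 2*x^2 ≤ (s:ℝ)^2*γ := by linarith [hX2.trans h5]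
    have hsγ : ((s:ℝ)-1)*γ ≤ (s:ℝ)^2*γ := by
      have : ((s:ℝ)-1) ≤ (s:ℝ)^2 := by nlinarith
      exact mul_le_mul_of_nonneg_right this hγ
    have hstep : x + 2*x^2 ≤ (s:ℝ)*(2*(s:ℝ)*γ*((n:ℝ)+1)) := by
      have hexpand : (s:ℝ)*(2*(s:ℝ)*γ*((n:ℝ)+1)) = 2*(s:ℝ)^2*γ*n + 2*(s:ℝ)^2*γ := by
        ring
      rw [hexpand]
      linarith [hx2b, hsγ, hxdef.le, hxdef.ge]
    have htr : (1/(s:ℝ))*(x + 2*x^2) ≤ (1/(s:ℝ))*((s:ℝ)*(2*(s:ℝ)*γ*((n:ℝ)+1))) :=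
      mul_le_mul_of_nonneg_left hstep (by positivity)
    refine htr.trans ?_
    have heq : (1/(s:ℝ))*((s:ℝ)*(2*(s:ℝ)*γ*((n:ℝ)+1))) = 2*(s:ℝ)*γ*((n:ℝ)+1) := by
      field_simp
    rw [heq]
    push_cast
    exact le_refl _

set_option maxHeartbeats 1000000 in
theorem statement_18
    (b s : ℕ) (hb : 2 ≤ b) (hs : 2 ≤ s)
    (μ : Measure ℝ) [IsProbabilityMeasure μ]
    (hmean : (∫ x, x ∂μ) = 0)
    (hvar : (∫ x, x ^ 2 ∂μ) = 1)
    (hmgf : ∀ β : ℝ, 0 < β → Integrable (fun x => Real.exp (β * x)) μ)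
    (hbs : b = s)
 :
    ∃ c₂ : ℝ, 0 < c₂ ∧ ∀ β : ℝ, 0 < β → β ≤ 1 → ∀ n : ℕ, (n : ℝ) ≤ c₂ / β →
      vseq b s (lam μ (2 * β) - 2 * lam μ β) n ≤ β := by
  subst hbs
  obtain ⟨K, hK1, hKb⟩ := gamma_bound μ hmean hvar hmgf
  have hK0 : (0:ℝ) < K := lt_of_lt_of_le one_pos hK1
  have hsR : (2:ℝ) ≤ (b:ℝ) := by exact_mod_cast hb
  have hs0 : (0:ℝ) < b := by linarith
  have hden : (0:ℝ) < 8*(b:ℝ)^2*K := by positivity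
  refine ⟨1/(8*(b:ℝ)^2*K), by positivity, ?_⟩
  intro β hβ hβ1 n hn
  set c₂ : ℝ := 1/(8*(b:ℝ)^2*K) with hc2def
  have hc2eq : 8*(b:ℝ)^2*K*c₂ = 1 := by
    rw [hc2def]; field_simp
  have hc2pos : 0 < c₂ := by positivity
  rcases Nat.eq_zero_or_pos n with rfl | hn1
  · simp [vseq]; linarith
  have hnR1 : (1:ℝ) ≤ (n:ℝ) := by exact_mod_cast hn1
  have hnβ : (n:ℝ)*β ≤ c₂ := (le_div_iff₀ hβ).mp hn
  have hβc : β ≤ c₂ := by nlinarith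
  set γ : ℝ := lam μ (2*β) - 2*lam μ β with hγdef
  have hγK : γ ≤ K*β^2 := hKb β hβ hβ1
  set γ' : ℝ := max γ 0 with hγ'def
  have hγ'0 : 0 ≤ γ' := le_max_right _ _
  have hγ'K : γ' ≤ K*β^2 := max_le hγK (by positivity)
  have hmono : vseq b b γ n ≤ vseq b b γ' n :=
    vseq_mono b b (by omega) (by omega) (le_max_left _ _) n
  have hA : ((b:ℝ)-1) + 2*(b:ℝ)^2*(n:ℝ) ≤ 3*(b:ℝ)^2*(n:ℝ) := by nlinarith
  have hApos : (0:ℝ) ≤ ((b:ℝ)-1) + 2*(b:ℝ)^2*(n:ℝ) := by nlinarith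
  have hn0' : (0:ℝ) ≤ (n:ℝ) := Nat.cast_nonneg n
  have hn2γ : (n:ℝ)*γ' ≤ K*c₂*β := by
    have h1 : (n:ℝ)*γ' ≤ (n:ℝ)*(K*β^2) := mul_le_mul_of_nonneg_left hγ'K hn0'
    have h2 : (n:ℝ)*(K*β^2) = (K*β)*((n:ℝ)*β) := by ring
    have h3 : (K*β)*((n:ℝ)*β) ≤ (K*β)*c₂ :=
      mul_le_mul_of_nonneg_left hnβ (by positivity)
    have h4 : (K*β)*c₂ = K*c₂*β := by ring
    linarith
  have hKc0 : (0:ℝ) ≤ K*c₂ := by positivity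
  have hC2 : (((b:ℝ)-1) + 2*(b:ℝ)^2*(n:ℝ)) * γ' ≤ 1/2 := by
    have h1 : (((b:ℝ)-1) + 2*(b:ℝ)^2*(n:ℝ)) * γ' ≤ (3*(b:ℝ)^2*(n:ℝ)) * γ' :=
      mul_le_mul_of_nonneg_right hA hγ'0
    have h1' : (3*(b:ℝ)^2*(n:ℝ)) * γ' = 3*(b:ℝ)^2*((n:ℝ)*γ') := by ring
    have h2 : 3*(b:ℝ)^2*((n:ℝ)*γ') ≤ 3*(b:ℝ)^2*(K*c₂*β) :=
      mul_le_mul_of_nonneg_left hn2γ (by positivity)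
    have h3 : 3*(b:ℝ)^2*(K*c₂*β) ≤ 3*(b:ℝ)^2*(K*c₂*1) :=
      mul_le_mul_of_nonneg_left (mul_le_mul_of_nonneg_left hβ1 hKc0) (by positivity)
    have h4 : 3*(b:ℝ)^2*(K*c₂*1) = 3/8 := by
      have : 3*(b:ℝ)^2*(K*c₂*1) = (3/8)*(8*(b:ℝ)^2*K*c₂) := by ring
      rw [this, hc2eq]; norm_num
    linarith
  have hC1 : (((b:ℝ)-1) + 2*(b:ℝ)^2*(n:ℝ))^2 * γ' ≤ (b:ℝ)^2/2 := by
    have h1 : (((b:ℝ)-1) + 2*(b:ℝ)^2*(n:ℝ))^2 * γ' ≤ (3*(b:ℝ)^2*(n:ℝ))^2 * γ' :=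
      mul_le_mul_of_nonneg_right (pow_le_pow_left₀ hApos hA 2) hγ'0
    have h1' : (3*(b:ℝ)^2*(n:ℝ))^2 * γ' = (9*(b:ℝ)^4*(n:ℝ)^2) * γ' := by ring
    have h2 : (9*(b:ℝ)^4*(n:ℝ)^2) * γ' ≤ (9*(b:ℝ)^4*(n:ℝ)^2) * (K*β^2) :=
      mul_le_mul_of_nonneg_left hγ'K (by positivity)
    have h3 : (9*(b:ℝ)^4*(n:ℝ)^2) * (K*β^2) = (9*(b:ℝ)^4*K)*((n:ℝ)*β)^2 := by ring
    have hnb0 : 0 ≤ (n:ℝ)*β := by positivity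
    have h40 : ((n:ℝ)*β)^2 ≤ c₂^2 := pow_le_pow_left₀ hnb0 hnβ 2
    have h4 : (9*(b:ℝ)^4*K)*((n:ℝ)*β)^2 ≤ (9*(b:ℝ)^4*K)*c₂^2 :=
      mul_le_mul_of_nonneg_left h40 (by positivity)
    have h5 : (9*(b:ℝ)^4*K)*c₂^2 ≤ 9/64 := by
      have hgg : (8*(b:ℝ)^2*K*c₂)^2 = 1 := by rw [hc2eq]; norm_num
      have hprod : (0:ℝ) ≤ K*((b:ℝ)^2*c₂)^2*(K-1) :=
        mul_nonneg (mul_nonneg hK0.le (sq_nonneg _)) (by linarith)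
      nlinarith [hgg, hprod]
    have h6 : (9:ℝ)/64 ≤ (b:ℝ)^2/2 := by nlinarith
    linarith
  have hmain := vseq_main b hb hγ'0 n hC2 hC1 n le_rfl
  have hfinal : 2*(b:ℝ)*γ'*(n:ℝ) ≤ β := by
    have h1 : 2*(b:ℝ)*γ'*(n:ℝ) = 2*(b:ℝ)*((n:ℝ)*γ') := by ring
    have h2 : 2*(b:ℝ)*((n:ℝ)*γ') ≤ 2*(b:ℝ)*(K*c₂*β) :=
      mul_le_mul_of_nonneg_left hn2γ (by positivity)
    have h3 : 2*(b:ℝ)*(K*c₂*β) = (2*(b:ℝ)*K*c₂)*β := by ring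
    have h4 : 2*(b:ℝ)*K*c₂ ≤ 1 := by
      have e1 : 2*(b:ℝ)*K*c₂ = ((2*(b:ℝ)*K*c₂)*(4*(b:ℝ)))/(4*(b:ℝ)) := by
        field_simp
      have e2 : (2*(b:ℝ)*K*c₂)*(4*(b:ℝ)) = 8*(b:ℝ)^2*K*c₂ := by ring
      rw [e1, e2, hc2eq]
      rw [div_le_one (by positivity)]
      linarith
    have h5 : (2*(b:ℝ)*K*c₂)*β ≤ 1*β := mul_le_mul_of_nonneg_right h4 hβ.le
    linarith
  have : vseq b b (lam μ (2*β) - 2*lam μ β) n ≤ β := by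
    calc vseq b b γ n ≤ vseq b b γ' n := hmono
      _ ≤ 2*(b:ℝ)*γ'*(n:ℝ) := hmain
      _ ≤ β := hfinal
  exact this

end DiamondPolymer
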